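/- arXiv:2304.09643 — 3 statements merged into one kernel-verified Lean document; each statement's English description precedes it below -/
import Mathlib

section
/- For all conditional probability distributions P(a,b|x,y) with a,b,x,y ∈ {0,1} admitting a local hidden variable decomposition P(a,b|x,y) = Σ_λ q(λ) P_A(a|x,λ) P_B(b|y,λ) with deterministic response functions, and for input distribution ν(x,y) with (1/2−ε)² ≤ ν(x,y) ≤ (1/2+ε)² for all (x,y), where P(a,b,x,y) = ν(x,y)P(a,b|x,y), the MDL-Hardy parameter M_ε := (1/2−ε)² P(0,0,0,0) − (1/2+ε)² [P(0,1,0,1) + P(1,0,1,0) + P(0,0,1,1)] satisfies M_ε ≤ 0. -/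
set_option maxHeartbeats 1600000 in
open Finset in
/-- Classical (local hidden variable) bound `M_ε ≤ 0` for the MDL-Hardy parameter:
for any LHV behaviour with deterministic response functions and any input distribution
`ν` with `(1/2-ε)² ≤ ν(x,y) ≤ (1/2+ε)²`, the MDL-Hardy expression is nonpositive.
Here inputs/outputs are booleans (`false = 0`, `true = 1`). -/
theorem mdl_hardy_classical_bound (ε : ℝ) (hε : 0 ≤ ε)
    (Λ : Type) [Fintype Λ] (q : Λ → ℝ) (hq : ∀ l, 0 ≤ q l) (hq1 : ∑ l, q l = 1)
    (fA fB : Bool → Λ → Bool)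
    (P : Bool → Bool → Bool → Bool → ℝ)
    (hP : ∀ a b x y, P a b x y =
      ∑ l, q l * (if fA x l = a then 1 else 0) * (if fB y l = b then 1 else 0))
    (ν : Bool → Bool → ℝ)
    (hν : ∀ x y, (1 / 2 - ε) ^ 2 ≤ ν x y ∧ ν x y ≤ (1 / 2 + ε) ^ 2)
    (Pxy : Bool → Bool → Bool → Bool → ℝ)
    (hPxy : ∀ a b x y, Pxy a b x y = ν x y * P a b x y) :
    (1 / 2 - ε) ^ 2 * Pxy false false false false
      - (1 / 2 + ε) ^ 2 * (Pxy false true false true + Pxy true false true false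
          + Pxy false false true true) ≤ 0 := by
  simp only [hPxy, hP, Finset.mul_sum, ← Finset.sum_add_distrib, ← Finset.sum_sub_distrib]
  apply Finset.sum_nonpos
  intro l _
  have h1 := (hν false false).2
  have h2 := (hν false true).1
  have h3 := (hν true false).1
  have h4 := (hν true true).1
  have hql := hq l
  have hK : (0:ℝ) ≤ (1/2 - ε)^2 := sq_nonneg _
  have hL : (0:ℝ) ≤ (1/2 + ε)^2 := sq_nonneg _
  have n2 : (0:ℝ) ≤ ν false true := hK.trans h2
  have n3 : (0:ℝ) ≤ ν true false := hK.trans h3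
  have n4 : (0:ℝ) ≤ ν true true := hK.trans h4
  have k2 : (1/2 - ε)^2 * ν false false ≤ (1/2 + ε)^2 * ν false true := by
    calc (1/2 - ε)^2 * ν false false ≤ (1/2 - ε)^2 * (1/2 + ε)^2 :=
          mul_le_mul_of_nonneg_left h1 hK
      _ ≤ (1/2 + ε)^2 * ν false true := by
          rw [mul_comm]; exact mul_le_mul_of_nonneg_left h2 hL
  have k3 : (1/2 - ε)^2 * ν false false ≤ (1/2 + ε)^2 * ν true false := by
    calc (1/2 - ε)^2 * ν false false ≤ (1/2 - ε)^2 * (1/2 + ε)^2 :=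
          mul_le_mul_of_nonneg_left h1 hK
      _ ≤ (1/2 + ε)^2 * ν true false := by
          rw [mul_comm]; exact mul_le_mul_of_nonneg_left h3 hL
  have k4 : (1/2 - ε)^2 * ν false false ≤ (1/2 + ε)^2 * ν true true := by
    calc (1/2 - ε)^2 * ν false false ≤ (1/2 - ε)^2 * (1/2 + ε)^2 :=
          mul_le_mul_of_nonneg_left h1 hK
      _ ≤ (1/2 + ε)^2 * ν true true := by
          rw [mul_comm]; exact mul_le_mul_of_nonneg_left h4 hL
  cases hA0 : fA false l <;> cases hA1 : fA true l <;> cases hB0 : fB false l <;>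
    cases hB1 : fB true l <;>
      simp only [hA0, hA1, hB0, hB1, if_true, if_false, reduceCtorEq, ite_true, ite_false,
        mul_one, mul_zero, zero_mul, add_zero, zero_add, sub_zero, zero_sub, neg_nonpos] <;>
      nlinarith [mul_le_mul_of_nonneg_right k2 hql, mul_le_mul_of_nonneg_right k3 hql,
        mul_le_mul_of_nonneg_right k4 hql, mul_nonneg (mul_nonneg hL n2) hql,
        mul_nonneg (mul_nonneg hL n3) hql, mul_nonneg (mul_nonneg hL n4) hql]
end

section
/- For every local deterministic strategy in the MDL-GHZ test (deterministic outputs a,b,c ∈ {0,1} as functions of x,y,z ∈ {1,2} respectively), the MDL-GHZ parameter M̄_ε is at most 0, for any input distribution ν with (1/2−ε)³ ≤ ν(x,y,z) ≤ (1/2+ε)³ and any ε ∈ [0, 1/2). -/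
/-- The MDL-GHZ indicator `M_ε(a,b,c,x,y,z)`: inputs `x,y,z ∈ Fin 2` (`0` = setting 1,
`1` = setting 2), outputs `a,b,c ∈ Bool`. -/
noncomputable def mdlGhzInd (ε : ℝ) (a b c : Bool) (x y z : Fin 2) : ℝ :=
  if (x, y, z) = (0, 0, 0) ∧ xor a (xor b c) = false then (1 / 2 - ε) ^ 3
  else if ((x, y, z) = (0, 1, 1) ∨ (x, y, z) = (1, 0, 1) ∨ (x, y, z) = (1, 1, 0)) ∧
      xor a (xor b c) = false then -(1 / 2 + ε) ^ 3
  else 0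

/-- The MDL-GHZ parameter `M̄_ε = Σ ν(x,y,z)·M_ε(a,b,c,x,y,z)·P(a,b,c|x,y,z)`. -/
noncomputable def mdlGhzValue (ε : ℝ) (ν : Fin 2 → Fin 2 → Fin 2 → ℝ)
    (P : Bool → Bool → Bool → Fin 2 → Fin 2 → Fin 2 → ℝ) : ℝ :=
  ∑ x, ∑ y, ∑ z, ∑ a, ∑ b, ∑ c, ν x y z * mdlGhzInd ε a b c x y z * P a b c x y z


set_option maxHeartbeats 10000000

lemma mdl_key (ε p q : ℝ) (hε0 : 0 ≤ ε) (hε : ε < 1/2)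
    (hp : p ≤ (1/2+ε)^3) (hq : (1/2-ε)^3 ≤ q) :
    p * (1/2-ε)^3 ≤ q * (1/2+ε)^3 := by
  have h2 : (0:ℝ) ≤ 1/2-ε := by linarith
  have hA : (0:ℝ) ≤ (1/2-ε)^3 := by positivity
  have hB : (0:ℝ) ≤ (1/2+ε)^3 := by positivity
  calc p * (1/2-ε)^3 ≤ (1/2+ε)^3 * (1/2-ε)^3 := by nlinarith
    _ ≤ q * (1/2+ε)^3 := by nlinarith

/-- Classical bound for the MDL-GHZ test: every local deterministic strategy
(outputs `a = f x`, `b = g y`, `c = h z`) has MDL-GHZ parameter at most `0`, for any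
input distribution `ν` with `(1/2-ε)³ ≤ ν(x,y,z) ≤ (1/2+ε)³` and any `ε ∈ [0, 1/2)`. -/
theorem mdl_ghz_classical_bound (ε : ℝ) (hε : 0 ≤ ε ∧ ε < 1 / 2)
    (ν : Fin 2 → Fin 2 → Fin 2 → ℝ)
    (hν : ∀ x y z, (1 / 2 - ε) ^ 3 ≤ ν x y z ∧ ν x y z ≤ (1 / 2 + ε) ^ 3)
    (f g h : Fin 2 → Bool)
    (P : Bool → Bool → Bool → Fin 2 → Fin 2 → Fin 2 → ℝ)
    (hP : ∀ a b c x y z,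
      P a b c x y z = if a = f x ∧ b = g y ∧ c = h z then 1 else 0) :
    mdlGhzValue ε ν P ≤ 0 := by
  obtain ⟨hε0, hε1⟩ := hε
  have h2 : (0:ℝ) ≤ 1/2-ε := by linarith
  have hA : (0:ℝ) ≤ (1/2-ε)^3 := by positivity
  have hB : (0:ℝ) ≤ (1/2+ε)^3 := by positivity
  have k1 := mdl_key ε (ν 0 0 0) (ν 0 1 1) hε0 hε1 (hν 0 0 0).2 (hν 0 1 1).1
  have k2 := mdl_key ε (ν 0 0 0) (ν 1 0 1) hε0 hε1 (hν 0 0 0).2 (hν 1 0 1).1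
  have k3 := mdl_key ε (ν 0 0 0) (ν 1 1 0) hε0 hε1 (hν 0 0 0).2 (hν 1 1 0).1
  have n1 := (hν 0 1 1).1; have n2 := (hν 1 0 1).1; have n3 := (hν 1 1 0).1
  rcases hf0 : f 0 <;> rcases hf1 : f 1 <;> rcases hg0 : g 0 <;> rcases hg1 : g 1 <;>
    rcases hh0 : h 0 <;> rcases hh1 : h 1 <;>
    simp [mdlGhzValue, mdlGhzInd, hP, Fin.sum_univ_two, hf0, hf1, hg0, hg1, hh0, hh1] <;>
    linarith [mul_nonneg (hA.trans n1) hB, mul_nonneg (hA.trans n2) hB,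
      mul_nonneg (hA.trans n3) hB, mul_nonneg (hA.trans (hν 0 0 0).1) hA]
end

section
/- Suppose the observed block average satisfies L = (2/m')·Σ_{k=1}^{m'/2} B_k ≥ δ, and the Azuma bound Pr[|L − L̄| ≥ δ/2] ≤ 2·exp(−m'·δ²/16) holds, where L̄ is the average of the conditional means and each conditional mean M̄_k ≤ 1/2. Then with probability at least 1 − 2·exp(−m'·δ²/16), at least m'δ/(2(2−δ)) of the m'/2 rounds satisfy M̄_k ≥ δ/4. -/
/-!
Off the Azuma event, `L̄ > L - δ/2 ≥ δ/2`, so the conditional means of the `n = m'/2` rounds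
sum to more than `nδ/2`. Since each of them is at most `1/2`, and those below `δ/4` contribute
less than `δ/4` each, at least `(nδ/2 - nδ/4)/(1/2 - δ/4) = nδ/(2 - δ)` rounds reach `δ/4`.
-/

open Finset MeasureTheory

theorem Finset.sum_le_card_filter_mul_add {ι : Type*} (s : Finset ι) (f : ι → ℝ) {b : ℝ}
    (κ : ℝ) (hf : ∀ i ∈ s, f i ≤ b) :
    ∑ i ∈ s, f i ≤ #{i ∈ s | κ ≤ f i} * b + (#s - #{i ∈ s | κ ≤ f i}) * κ := by
  have hcard : (#{i ∈ s | ¬κ ≤ f i} : ℝ) = #s - #{i ∈ s | κ ≤ f i} := by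
    rw [eq_sub_iff_add_eq', ← Nat.cast_add, card_filter_add_card_filter_not]
  rw [← sum_filter_add_sum_filter_not s (κ ≤ f ·), ← hcard]
  gcongr
  · simpa [mul_comm] using sum_le_card_nsmul _ _ b fun i hi => hf i (mem_filter.1 hi).1
  · simpa [mul_comm] using sum_le_card_nsmul _ _ κ fun i hi => (not_le.1 (mem_filter.1 hi).2).le

theorem Finset.div_le_card_filter_of_le {ι : Type*} (s : Finset ι) (f : ι → ℝ) {b κ : ℝ}
    (hκb : κ < b) (hf : ∀ i ∈ s, f i ≤ b) :
    (∑ i ∈ s, f i - #s * κ) / (b - κ) ≤ #{i ∈ s | κ ≤ f i} := by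
  rw [div_le_iff₀ (sub_pos.2 hκb)]
  linarith [s.sum_le_card_filter_mul_add f κ hf]

theorem MeasureTheory.one_sub_le_measure_of_compl_subset {Ω : Type*} {mΩ : MeasurableSpace Ω}
    {μ : Measure Ω} [IsProbabilityMeasure μ] {s t : Set Ω} (hst : sᶜ ⊆ t) : 1 - μ s ≤ μ t :=
  calc 1 - μ s = μ Set.univ - μ s := by rw [measure_univ]
    _ ≤ μ (Set.univ \ s) := le_measure_sdiff
    _ ≤ μ t := measure_mono (Set.compl_eq_univ_sdiff s ▸ hst)

open MeasureTheory Finset in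
theorem azuma_counting_combined_general {Ω : Type} {mΩ : MeasurableSpace Ω} (μ : Measure Ω)
    [IsProbabilityMeasure μ] (m' n : ℕ) (hm' : m' = 2 * n)
    (δ : ℝ) (hδ : 0 < δ ∧ δ < 1)
    (Mbar : Fin n → Ω → ℝ)
    (hMbar : ∀ k ω, Mbar k ω ≤ 1 / 2)
    (L Lbar : Ω → ℝ)
    (hLbar : ∀ ω, Lbar ω = (2 / (m' : ℝ)) * ∑ k, Mbar k ω)
    (hobs : ∀ ω, δ ≤ L ω)
    (hAzuma : μ {ω | δ / 2 ≤ |L ω - Lbar ω|} ≤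
      ENNReal.ofReal (2 * Real.exp (-(m' : ℝ) * δ ^ 2 / 16))) :
    1 - ENNReal.ofReal (2 * Real.exp (-(m' : ℝ) * δ ^ 2 / 16)) ≤
      μ {ω | (m' : ℝ) * δ / (2 * (2 - δ)) ≤
        ((Finset.univ.filter fun k : Fin n => δ / 4 ≤ Mbar k ω).card : ℝ)} := by
  obtain ⟨hδ0, hδ1⟩ := hδ
  refine (tsub_le_tsub_left hAzuma 1).trans (one_sub_le_measure_of_compl_subset fun ω hω => ?_)
  have hclose : |L ω - Lbar ω| < δ / 2 := not_le.1 hω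
  have hLbar_gt : δ / 2 < Lbar ω := by linarith [hobs ω, (abs_lt.1 hclose).2]
  subst hm'
  rcases n.eq_zero_or_pos with rfl | hn
  · simp
  have hsum : n * δ / 2 < ∑ k, Mbar k ω := by
    rw [hLbar ω] at hLbar_gt
    field_simp at hLbar_gt
    push_cast at hLbar_gt
    linarith
  calc ((2 * n : ℕ) : ℝ) * δ / (2 * (2 - δ))
      ≤ (∑ k, Mbar k ω - n * (δ / 4)) / (1 / 2 - δ / 4) := by
        rw [div_le_div_iff₀ (by linarith) (by linarith)]
        push_cast
        nlinarith
    _ ≤ _ := by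
        simpa using univ.div_le_card_filter_of_le (fun k => Mbar k ω) (by linarith)
          fun k _ => hMbar k ω

open MeasureTheory Finset in
/-- Combining the Azuma estimation lemma with the counting lemma: if the observed block
average satisfies `L ≥ δ`, the Azuma bound `Pr[|L - L̄| ≥ δ/2] ≤ 2 exp(-m' δ²/16)` holds,
and every conditional mean `M̄ k ≤ 1/2`, then with probability at least
`1 - 2 exp(-m' δ²/16)` at least `m'δ/(2(2-δ))` of the `m'/2` rounds satisfy
`M̄ k ≥ δ/4`. -/
theorem azuma_counting_combined {Ω : Type} {mΩ : MeasurableSpace Ω} (μ : Measure Ω)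
    [IsProbabilityMeasure μ] (m' n : ℕ) (hn : 0 < n) (hm' : m' = 2 * n)
    (δ : ℝ) (hδ : 0 < δ ∧ δ < 1)
    (B Mbar : Fin n → Ω → ℝ)
    (hB : ∀ k ω, B k ω ∈ Set.Icc (0 : ℝ) 1)
    (hMbar : ∀ k ω, Mbar k ω ≤ 1 / 2)
    (L Lbar : Ω → ℝ)
    (hL : ∀ ω, L ω = (2 / (m' : ℝ)) * ∑ k, B k ω)
    (hLbar : ∀ ω, Lbar ω = (2 / (m' : ℝ)) * ∑ k, Mbar k ω)
    (hobs : ∀ ω, δ ≤ L ω)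
    (hAzuma : μ {ω | δ / 2 ≤ |L ω - Lbar ω|} ≤
      ENNReal.ofReal (2 * Real.exp (-(m' : ℝ) * δ ^ 2 / 16))) :
    1 - ENNReal.ofReal (2 * Real.exp (-(m' : ℝ) * δ ^ 2 / 16)) ≤
      μ {ω | (m' : ℝ) * δ / (2 * (2 - δ)) ≤
        ((Finset.univ.filter fun k : Fin n => δ / 4 ≤ Mbar k ω).card : ℝ)} :=
  azuma_counting_combined_general (mΩ := mΩ) μ m' n hm' δ hδ Mbar hMbar L Lbar hLbar hobs hAzuma
end
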